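/- arXiv:1210.5225 — 4 statements merged into one kernel-verified Lean document; each statement's English description precedes it below -/
import Mathlib

section
/- Let D be an N×N positive definite diagonal matrix, c ∈ ℝ^N, γ > 0, and K ∈ {0,…,N}. There exists x with (x−c)ᵀD(x−c) ≤ γ having at least K zero components if and only if the sum of the K smallest values among {D_nn c_n² : n = 1,…,N} is at most γ. -/
/-!
Zeroing the coordinates in `T` costs at least `∑ n ∈ T, d n * c n ^ 2` in the diagonal quadratic
form, and exactly that much for the point that agrees with `c` off `T`. So the cheapest way to
get `K` zeros is to zero the `K` coordinates with the smallest `d n * c n ^ 2`.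
-/

open Matrix

/-- Sum of the `K` smallest elements of a finite sequence, as the infimum of sums over
subsets of cardinality `K`. -/
noncomputable def sumKSmallest {N : ℕ} (a : Fin N → ℝ) (K : ℕ) : ℝ :=
  sInf {s : ℝ | ∃ T : Finset (Fin N), T.card = K ∧ s = ∑ n ∈ T, a n}

open Finset

section DiagonalQuadraticForm

variable {ι R : Type*} [Fintype ι]

theorem dotProduct_diagonal_mulVec_self [DecidableEq ι] [CommSemiring R] (d v : ι → R) :
    v ⬝ᵥ diagonal d *ᵥ v = ∑ i, d i * v i ^ 2 := by
  simp only [dotProduct, mulVec_diagonal]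
  exact sum_congr rfl fun i _ => by ring

theorem sum_mul_sq_le_sum_mul_sq_sub_of_eq_zero [CommRing R] [LinearOrder R] [IsOrderedRing R]
    {d x : ι → R} (hd : ∀ i, 0 ≤ d i) (c : ι → R) {T : Finset ι} (hx : ∀ i ∈ T, x i = 0) :
    ∑ i ∈ T, d i * c i ^ 2 ≤ ∑ i, d i * (x i - c i) ^ 2 :=
  calc ∑ i ∈ T, d i * c i ^ 2 = ∑ i ∈ T, d i * (x i - c i) ^ 2 :=
        sum_congr rfl fun i hi => by rw [hx i hi]; ring
    _ ≤ ∑ i, d i * (x i - c i) ^ 2 :=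
        sum_le_sum_of_subset_of_nonneg (subset_univ T) fun i _ _ =>
          mul_nonneg (hd i) (sq_nonneg _)

theorem sum_mul_sq_piecewise_zero_sub [DecidableEq ι] [CommRing R] (d c : ι → R) (T : Finset ι) :
    ∑ i, d i * (T.piecewise (0 : ι → R) c i - c i) ^ 2 = ∑ i ∈ T, d i * c i ^ 2 := by
  rw [← sum_subset (subset_univ T) fun i _ hi => by simp [hi]]
  exact sum_congr rfl fun i hi => by simp [hi]

end DiagonalQuadraticForm

section SumKSmallest

variable {N : ℕ} (a : Fin N → ℝ)

theorem finite_setOf_sum_card_eq (K : ℕ) :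
    {s : ℝ | ∃ T : Finset (Fin N), T.card = K ∧ s = ∑ n ∈ T, a n}.Finite :=
  (Set.finite_range fun T : Finset (Fin N) => ∑ n ∈ T, a n).subset <| by
    rintro s ⟨T, -, rfl⟩
    exact ⟨T, rfl⟩

theorem sumKSmallest_le_sum {K : ℕ} {T : Finset (Fin N)} (hT : T.card = K) :
    sumKSmallest a K ≤ ∑ n ∈ T, a n :=
  csInf_le (finite_setOf_sum_card_eq a K).bddBelow ⟨T, hT, rfl⟩

theorem exists_card_eq_sumKSmallest_eq_sum {K : ℕ} (hK : K ≤ N) :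
    ∃ T : Finset (Fin N), T.card = K ∧ sumKSmallest a K = ∑ n ∈ T, a n := by
  obtain ⟨T, -, hT⟩ := exists_subset_card_eq (s := (univ : Finset (Fin N))) (by simpa using hK)
  have hmem : sumKSmallest a K ∈ {s : ℝ | ∃ T : Finset (Fin N), T.card = K ∧ s = ∑ n ∈ T, a n} :=
    Set.Nonempty.csInf_mem ⟨_, T, hT, rfl⟩ (finite_setOf_sum_card_eq a K)
  exact hmem

end SumKSmallest

theorem diagonal_ellipsoid_K_zeros_iff_general {N : ℕ}
    (d : Fin N → ℝ) (hd : ∀ n, 0 < d n) (c : Fin N → ℝ) (γ : ℝ)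
    (K : ℕ) (hK : K ≤ N) :
    (∃ x : Fin N → ℝ, (x - c) ⬝ᵥ (Matrix.diagonal d) *ᵥ (x - c) ≤ γ ∧
        ∃ T : Finset (Fin N), T.card = K ∧ ∀ n ∈ T, x n = 0) ↔
      sumKSmallest (fun n => d n * c n ^ 2) K ≤ γ := by
  simp only [dotProduct_diagonal_mulVec_self, Pi.sub_apply]
  constructor
  · rintro ⟨x, hxγ, T, hTcard, hTzero⟩
    calc sumKSmallest _ K ≤ ∑ n ∈ T, d n * c n ^ 2 := sumKSmallest_le_sum _ hTcard
      _ ≤ ∑ n, d n * (x n - c n) ^ 2 :=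
          sum_mul_sq_le_sum_mul_sq_sub_of_eq_zero (fun n => (hd n).le) c hTzero
      _ ≤ γ := hxγ
  · intro hγ
    obtain ⟨T, hTcard, hT⟩ := exists_card_eq_sumKSmallest_eq_sum _ hK
    refine ⟨T.piecewise 0 c, ?_, T, hTcard, fun n hn => T.piecewise_eq_of_mem _ _ hn⟩
    rwa [sum_mul_sq_piecewise_zero_sub, ← hT]

/-- For a positive definite diagonal matrix `D = diagonal d`, the ellipsoid
`(x−c)ᵀD(x−c) ≤ γ` contains a point with at least `K` zero components iff the sum of the
`K` smallest values `d_n c_n²` is at most `γ`. -/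
theorem diagonal_ellipsoid_K_zeros_iff {N : ℕ}
    (d : Fin N → ℝ) (hd : ∀ n, 0 < d n) (c : Fin N → ℝ) (γ : ℝ) (hγ : 0 < γ)
    (K : ℕ) (hK : K ≤ N) :
    (∃ x : Fin N → ℝ, (x - c) ⬝ᵥ (Matrix.diagonal d) *ᵥ (x - c) ≤ γ ∧
        ∃ T : Finset (Fin N), T.card = K ∧ ∀ n ∈ T, x n = 0) ↔
      sumKSmallest (fun n => d n * c n ^ 2) K ≤ γ :=
  diagonal_ellipsoid_K_zeros_iff_general d hd c γ K hK
end

section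
/- Let Q be an N×N symmetric positive definite matrix, c ∈ ℝ^N, γ > 0, and suppose c_n² / (Q⁻¹)_nn ≤ γ for all n. Then there exists a feasible point x of the ellipsoid (x−c)ᵀQ(x−c) ≤ γ, namely x = θc with θ = 1 − √(γ / cᵀQc) (assuming cᵀQc > γ), whose weighted ℓ¹ cost Σ_n |x_n| / (√(γ(Q⁻¹)_nn) + |c_n|) is at most θN/2. -/
open Matrix

/-!
Shrinking `c` towards the origin by the factor `θ = 1 - √(γ / cᵀQc)` moves it by `-√(γ / cᵀQc) • c`,
whose `Q`-quadratic form is exactly `γ`, so `θc` lies on the boundary of the ellipsoid.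
The hypothesis says `|c_n| ≤ √(γ (Q⁻¹)_nn)`, so each weight `|c_n| / (√(γ (Q⁻¹)_nn) + |c_n|)`
is at most `1/2`, and the cost of `θc` is at most `θN/2`.
-/

lemma smul_sub_self_dotProduct_mulVec {ι R : Type*} [Fintype ι] [CommRing R]
    (Q : Matrix ι ι R) (c : ι → R) (t : R) :
    (t • c - c) ⬝ᵥ Q *ᵥ (t • c - c) = (1 - t) ^ 2 * (c ⬝ᵥ Q *ᵥ c) := by
  have hvec : t • c - c = (t - 1) • c := by rw [sub_smul, one_smul]
  rw [hvec, mulVec_smul, dotProduct_smul, smul_dotProduct, smul_eq_mul, smul_eq_mul]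
  ring

lemma shrink_dotProduct_mulVec_eq {ι : Type*} [Fintype ι] (Q : Matrix ι ι ℝ) (c : ι → ℝ)
    {γ : ℝ} (hγ : 0 ≤ γ) (hc : 0 < c ⬝ᵥ Q *ᵥ c) :
    ((1 - √(γ / (c ⬝ᵥ Q *ᵥ c))) • c - c) ⬝ᵥ Q *ᵥ ((1 - √(γ / (c ⬝ᵥ Q *ᵥ c))) • c - c) = γ := by
  rw [smul_sub_self_dotProduct_mulVec, sub_sub_cancel, Real.sq_sqrt (div_nonneg hγ hc.le),
    div_mul_cancel₀ _ hc.ne']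

lemma abs_div_add_abs_le_half {x b : ℝ} (h : |x| ≤ b) : |x| / (b + |x|) ≤ 1 / 2 := by
  rcases (abs_nonneg x).eq_or_lt with hx | hx
  · simp [← hx]
  · rw [div_le_div_iff₀ (by linarith) two_pos]
    linarith

lemma abs_le_sqrt_mul_of_sq_div_le {x d γ : ℝ} (hd : 0 < d) (h : x ^ 2 / d ≤ γ) :
    |x| ≤ √(γ * d) :=
  Real.abs_le_sqrt ((div_le_iff₀ hd).mp h)

theorem continuous_relaxation_absolute_upper_bound_general {N : ℕ}
    (Q : Matrix (Fin N) (Fin N) ℝ) (hQ : Q.PosDef)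
    (c : Fin N → ℝ) (γ : ℝ) (hγ : 0 < γ)
    (h_feas : ∀ n, c n ^ 2 / (Q⁻¹) n n ≤ γ)
    (h_out : γ < c ⬝ᵥ Q *ᵥ c) :
    (((1 - Real.sqrt (γ / (c ⬝ᵥ Q *ᵥ c))) • c - c) ⬝ᵥ
        Q *ᵥ ((1 - Real.sqrt (γ / (c ⬝ᵥ Q *ᵥ c))) • c - c) ≤ γ) ∧
      (∑ n, |(1 - Real.sqrt (γ / (c ⬝ᵥ Q *ᵥ c))) * c n| /
          (Real.sqrt (γ * (Q⁻¹) n n) + |c n|)) ≤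
        (1 - Real.sqrt (γ / (c ⬝ᵥ Q *ᵥ c))) * N / 2 := by
  have hc : 0 < c ⬝ᵥ Q *ᵥ c := hγ.trans h_out
  refine ⟨(shrink_dotProduct_mulVec_eq Q c hγ.le hc).le, ?_⟩
  set θ := 1 - √(γ / (c ⬝ᵥ Q *ᵥ c))
  have hθ : 0 ≤ θ := sub_nonneg.mpr (Real.sqrt_le_one.mpr ((div_le_one hc).mpr h_out.le))
  have hweight (n : Fin N) : |c n| / (√(γ * (Q⁻¹) n n) + |c n|) ≤ 1 / 2 :=
    abs_div_add_abs_le_half (abs_le_sqrt_mul_of_sq_div_le hQ.inv.diag_pos (h_feas n))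
  calc ∑ n, |θ * c n| / (√(γ * (Q⁻¹) n n) + |c n|)
      = ∑ n, θ * (|c n| / (√(γ * (Q⁻¹) n n) + |c n|)) := by
        simp only [abs_mul, abs_of_nonneg hθ, mul_div_assoc]
    _ ≤ ∑ _n : Fin N, θ * (1 / 2) :=
        Finset.sum_le_sum fun n _ => mul_le_mul_of_nonneg_left (hweight n) hθ
    _ = θ * N / 2 := by
        rw [Finset.sum_const, Finset.card_univ, Fintype.card_fin, nsmul_eq_mul]
        ring

/-- Proposition 1: With `c_n²/(Q⁻¹)_nn ≤ γ` for all `n` and `cᵀQc > γ`, the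
point `x = θc` with `θ = 1 − √(γ/cᵀQc)` is feasible for the ellipsoid and its weighted
ℓ¹ cost is at most `θN/2`. -/
theorem continuous_relaxation_absolute_upper_bound {N : ℕ}
    (Q : Matrix (Fin N) (Fin N) ℝ) (hQ : Q.PosDef) (hQsymm : Q.IsSymm)
    (c : Fin N → ℝ) (γ : ℝ) (hγ : 0 < γ)
    (h_feas : ∀ n, c n ^ 2 / (Q⁻¹) n n ≤ γ)
    (h_out : γ < c ⬝ᵥ Q *ᵥ c) :
    (((1 - Real.sqrt (γ / (c ⬝ᵥ Q *ᵥ c))) • c - c) ⬝ᵥ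
        Q *ᵥ ((1 - Real.sqrt (γ / (c ⬝ᵥ Q *ᵥ c))) • c - c) ≤ γ) ∧
      (∑ n, |(1 - Real.sqrt (γ / (c ⬝ᵥ Q *ᵥ c))) * c n| /
          (Real.sqrt (γ * (Q⁻¹) n n) + |c n|)) ≤
        (1 - Real.sqrt (γ / (c ⬝ᵥ Q *ᵥ c))) * N / 2 :=
  continuous_relaxation_absolute_upper_bound_general Q hQ c γ hγ h_feas h_out
end

section
/- Let Q be an N×N symmetric positive definite matrix with max_m Σ_{n≠m} |Q_mn|/√(Q_mm Q_nn) = δ < 1, c ∈ ℝ^N, γ > 0. Then the supremum E_d(K) of S_K({D_nn c_n²}) over all diagonal D with 0 ⪯ D ⪯ Q satisfies E_d(K) ≥ (1−δ)·S_K({Q_nn c_n²}). -/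
open Matrix

section Aux

variable {N : ℕ}

lemma setK_finite (f : Fin N → ℝ) (K : ℕ) :
    {s : ℝ | ∃ T : Finset (Fin N), T.card = K ∧ s = ∑ n ∈ T, f n}.Finite := by
  apply Set.Finite.subset (Set.finite_range (fun T : Finset (Fin N) => ∑ n ∈ T, f n))
  rintro s ⟨T, _, rfl⟩
  exact ⟨T, rfl⟩

lemma setK_nonempty (f : Fin N → ℝ) {K : ℕ} (hK : K ≤ N) :
    {s : ℝ | ∃ T : Finset (Fin N), T.card = K ∧ s = ∑ n ∈ T, f n}.Nonempty := by
  obtain ⟨T, _, hT⟩ := Finset.exists_subset_card_eq (s := (Finset.univ : Finset (Fin N)))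
    (n := K) (by simpa using hK)
  exact ⟨∑ n ∈ T, f n, T, hT, rfl⟩

lemma sumKSmallest_le (f : Fin N → ℝ) {K : ℕ} {T : Finset (Fin N)} (hT : T.card = K) :
    sumKSmallest f K ≤ ∑ n ∈ T, f n :=
  csInf_le (setK_finite f K).bddBelow ⟨T, hT, rfl⟩

lemma le_sumKSmallest (f : Fin N → ℝ) {K : ℕ} (hK : K ≤ N) {b : ℝ}
    (h : ∀ T : Finset (Fin N), T.card = K → b ≤ ∑ n ∈ T, f n) :
    b ≤ sumKSmallest f K := by
  refine le_csInf (setK_nonempty f hK) ?_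
  rintro s ⟨T, hT, rfl⟩
  exact h T hT

lemma sum_erase_comm (f : Fin N → Fin N → ℝ) :
    ∑ m, ∑ n ∈ Finset.univ.erase m, f m n = ∑ n, ∑ m ∈ Finset.univ.erase n, f m n := by
  have h1 : ∀ m, (Finset.univ.erase m : Finset (Fin N)) =
      Finset.univ.filter (fun k => k ≠ m) := by
    intro m; ext k; simp
  calc ∑ m, ∑ n ∈ Finset.univ.erase m, f m n
      = ∑ m, ∑ n, if n ≠ m then f m n else 0 := by
        refine Finset.sum_congr rfl fun m _ => ?_
        rw [h1, Finset.sum_filter]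
    _ = ∑ n, ∑ m, if n ≠ m then f m n else 0 := Finset.sum_comm
    _ = ∑ n, ∑ m ∈ Finset.univ.erase n, f m n := by
        refine Finset.sum_congr rfl fun n _ => ?_
        rw [h1, Finset.sum_filter]
        exact Finset.sum_congr rfl fun m _ => by simp [ne_comm]

lemma quadform_eq (Q : Matrix (Fin N) (Fin N) ℝ) (d : Fin N → ℝ) (x : Fin N → ℝ) :
    star x ⬝ᵥ (Q - Matrix.diagonal d) *ᵥ x =
      (∑ m, ∑ n, x m * Q m n * x n) - ∑ n, d n * x n ^ 2 := by
  simp only [star_trivial, dotProduct, mulVec, Matrix.sub_apply, diagonal_apply, sub_mul, mul_sub,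
    Finset.sum_sub_distrib, Finset.mul_sum, mul_ite, ite_mul, zero_mul, mul_zero,
    Finset.sum_ite_eq, Finset.mem_univ, if_true]
  congr 1
  · exact Finset.sum_congr rfl fun m _ => Finset.sum_congr rfl fun n _ => by ring
  · exact Finset.sum_congr rfl fun n _ => by ring

lemma pointwise_bound (qmm qnn qmn xm xn : ℝ) (hm : 0 < qmm) (hn : 0 < qnn) :
    -(|qmn| / Real.sqrt (qmm * qnn) * ((qmm * xm ^ 2 + qnn * xn ^ 2) / 2)) ≤ xm * qmn * xn := by
  set a := Real.sqrt qmm with ha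
  set b := Real.sqrt qnn with hb
  have ha0 : 0 < a := Real.sqrt_pos.mpr hm
  have hb0 : 0 < b := Real.sqrt_pos.mpr hn
  have ha2 : a ^ 2 = qmm := Real.sq_sqrt hm.le
  have hb2 : b ^ 2 = qnn := Real.sq_sqrt hn.le
  have hab : Real.sqrt (qmm * qnn) = a * b := Real.sqrt_mul hm.le qnn
  rw [hab]
  have amgm : 2 * (a * b) * (|xm| * |xn|) ≤ a ^ 2 * xm ^ 2 + b ^ 2 * xn ^ 2 := by
    nlinarith [sq_nonneg (a * |xm| - b * |xn|), sq_abs xm, sq_abs xn]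
  have key : |qmn| * |xm| * |xn| ≤ |qmn| / (a * b) * ((qmm * xm ^ 2 + qnn * xn ^ 2) / 2) := by
    rw [div_mul_eq_mul_div, le_div_iff₀ (by positivity), ← ha2, ← hb2]
    nlinarith [mul_le_mul_of_nonneg_left amgm (abs_nonneg qmn)]
  have h2 : -(xm * qmn * xn) ≤ |qmn| * |xm| * |xn| := by
    calc -(xm * qmn * xn) ≤ |xm * qmn * xn| := neg_le_abs _
      _ = |qmn| * |xm| * |xn| := by rw [abs_mul, abs_mul]; ring
  linarith

lemma sub_diag_psd (Q : Matrix (Fin N) (Fin N) ℝ) (hQsymm : Q.IsSymm)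
    (hdiag : ∀ n, 0 < Q n n) (δ : ℝ)
    (hdom : ∀ m, ∑ n ∈ Finset.univ.erase m, |Q m n| / Real.sqrt (Q m m * Q n n) ≤ δ) :
    (Q - Matrix.diagonal (fun n => (1 - δ) * Q n n)).PosSemidef := by
  have hQherm : Q.IsHermitian := by
    rw [Matrix.IsHermitian]
    simpa using hQsymm.eq
  refine posSemidef_iff_dotProduct_mulVec.mpr ⟨hQherm.sub (Matrix.isHermitian_diagonal _), fun x => ?_⟩
  rw [quadform_eq]
  set r : Fin N → Fin N → ℝ := fun m n => |Q m n| / Real.sqrt (Q m m * Q n n) with hr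
  have hrsymm : ∀ m n, r n m = r m n := by
    intro m n
    simp only [hr, hQsymm.apply m n, mul_comm (Q n n) (Q m m)]
  have hr0 : ∀ m n, 0 ≤ r m n := fun m n => by
    apply div_nonneg (abs_nonneg _) (Real.sqrt_nonneg _)
  set S := ∑ n, Q n n * x n ^ 2 with hS
  have hS0 : 0 ≤ S := Finset.sum_nonneg fun n _ => mul_nonneg (hdiag n).le (sq_nonneg _)
  -- split diagonal from off-diagonal
  have hsplit : (∑ m, ∑ n, x m * Q m n * x n) =
      S + ∑ m, ∑ n ∈ Finset.univ.erase m, x m * Q m n * x n := by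
    rw [hS, ← Finset.sum_add_distrib]
    refine Finset.sum_congr rfl fun m _ => ?_
    rw [← Finset.add_sum_erase _ _ (Finset.mem_univ m)]
    ring_nf
  -- lower bound the off-diagonal part
  have hoff : -(δ * S) ≤ ∑ m, ∑ n ∈ Finset.univ.erase m, x m * Q m n * x n := by
    have step1 : ∑ m, ∑ n ∈ Finset.univ.erase m,
          -(r m n * ((Q m m * x m ^ 2 + Q n n * x n ^ 2) / 2)) ≤
        ∑ m, ∑ n ∈ Finset.univ.erase m, x m * Q m n * x n := by
      refine Finset.sum_le_sum fun m _ => Finset.sum_le_sum fun n _ => ?_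
      exact pointwise_bound (Q m m) (Q n n) (Q m n) (x m) (x n) (hdiag m) (hdiag n)
    have step2 : ∑ m, ∑ n ∈ Finset.univ.erase m,
          r m n * ((Q m m * x m ^ 2 + Q n n * x n ^ 2) / 2) ≤ δ * S := by
      have hsplit2 : ∑ m, ∑ n ∈ Finset.univ.erase m,
            r m n * ((Q m m * x m ^ 2 + Q n n * x n ^ 2) / 2) =
          (∑ m, ∑ n ∈ Finset.univ.erase m, r m n * (Q m m * x m ^ 2) / 2) +
          (∑ m, ∑ n ∈ Finset.univ.erase m, r m n * (Q n n * x n ^ 2) / 2) := by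
        rw [← Finset.sum_add_distrib]
        refine Finset.sum_congr rfl fun m _ => ?_
        rw [← Finset.sum_add_distrib]
        exact Finset.sum_congr rfl fun n _ => by ring
      have hswap : (∑ m, ∑ n ∈ Finset.univ.erase m, r m n * (Q n n * x n ^ 2) / 2) =
          ∑ m, ∑ n ∈ Finset.univ.erase m, r m n * (Q m m * x m ^ 2) / 2 := by
        rw [sum_erase_comm (fun m n => r m n * (Q n n * x n ^ 2) / 2)]
        exact Finset.sum_congr rfl fun m _ => Finset.sum_congr rfl fun n _ => by
          rw [hrsymm n m]
      rw [hsplit2, hswap, ← two_mul]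
      have hbound : ∀ m, ∑ n ∈ Finset.univ.erase m, r m n * (Q m m * x m ^ 2) / 2 ≤
          δ * (Q m m * x m ^ 2) / 2 := by
        intro m
        have h1 : ∑ n ∈ Finset.univ.erase m, r m n * (Q m m * x m ^ 2) / 2 =
            (∑ n ∈ Finset.univ.erase m, r m n) * ((Q m m * x m ^ 2) / 2) := by
          rw [Finset.sum_mul]
          exact Finset.sum_congr rfl fun n _ => by ring
        rw [h1]
        calc (∑ n ∈ Finset.univ.erase m, r m n) * ((Q m m * x m ^ 2) / 2)
            ≤ δ * ((Q m m * x m ^ 2) / 2) :=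
              mul_le_mul_of_nonneg_right (hdom m)
                (div_nonneg (mul_nonneg (hdiag m).le (sq_nonneg _)) (by norm_num))
          _ = δ * (Q m m * x m ^ 2) / 2 := by ring
      calc 2 * ∑ m, ∑ n ∈ Finset.univ.erase m, r m n * (Q m m * x m ^ 2) / 2
          ≤ 2 * ∑ m, δ * (Q m m * x m ^ 2) / 2 := by
            refine mul_le_mul_of_nonneg_left (Finset.sum_le_sum fun m _ => hbound m)
              (by norm_num)
        _ = δ * S := by rw [hS, Finset.mul_sum, Finset.mul_sum]; exact
            Finset.sum_congr rfl fun m _ => by ring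
    calc -(δ * S) ≤ -(∑ m, ∑ n ∈ Finset.univ.erase m,
          r m n * ((Q m m * x m ^ 2 + Q n n * x n ^ 2) / 2)) := by linarith
      _ = ∑ m, ∑ n ∈ Finset.univ.erase m,
          -(r m n * ((Q m m * x m ^ 2 + Q n n * x n ^ 2) / 2)) := by
          simp [Finset.sum_neg_distrib]
      _ ≤ _ := step1
  have hdpart : ∑ n, (fun n => (1 - δ) * Q n n) n * x n ^ 2 = (1 - δ) * S := by
    rw [hS, Finset.mul_sum]
    exact Finset.sum_congr rfl fun n _ => by ring
  rw [hsplit, hdpart]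
  linarith

lemma psd_diag_entry_nonneg {M : Matrix (Fin N) (Fin N) ℝ} (h : M.PosSemidef) (n : Fin N) :
    0 ≤ M n n := by
  have := (posSemidef_iff_dotProduct_mulVec.mp h).2 (Pi.single n 1)
  simpa [dotProduct, mulVec, Pi.single_apply, Finset.sum_ite_eq, mul_ite] using this

end Aux

/-- Under diagonal dominance with level `δ < 1`, the supremum `E_d(K)` of
`S_K({D_nn c_n²})` over diagonal `D` with `0 ⪯ D ⪯ Q` satisfies
`E_d(K) ≥ (1−δ)·S_K({Q_nn c_n²})`. -/
theorem Ed_ge_diag_dominant_bound {N : ℕ}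
    (Q : Matrix (Fin N) (Fin N) ℝ) (hQ : Q.PosDef) (hQsymm : Q.IsSymm)
    (hdiag : ∀ n, 0 < Q n n)
    (δ : ℝ) (hδ : δ < 1)
    (hdom : ∀ m, ∑ n ∈ Finset.univ.erase m, |Q m n| / Real.sqrt (Q m m * Q n n) ≤ δ)
    (c : Fin N → ℝ) (γ : ℝ) (hγ : 0 < γ) (K : ℕ) (hK : K ≤ N) :
    (1 - δ) * sumKSmallest (fun n => Q n n * c n ^ 2) K ≤
      sSup {s : ℝ | ∃ d : Fin N → ℝ, (Matrix.diagonal d).PosSemidef ∧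
        (Q - Matrix.diagonal d).PosSemidef ∧
        s = sumKSmallest (fun n => d n * c n ^ 2) K} := by
  have hδ0 : (0:ℝ) ≤ 1 - δ := by linarith
  set d : Fin N → ℝ := fun n => (1 - δ) * Q n n with hd
  have hd0 : ∀ n, 0 ≤ d n := fun n => mul_nonneg hδ0 (hdiag n).le
  have hDpsd : (Matrix.diagonal d).PosSemidef := Matrix.posSemidef_diagonal_iff.mpr hd0
  have hQDpsd : (Q - Matrix.diagonal d).PosSemidef := sub_diag_psd Q hQsymm hdiag δ hdom
  set bigset : Set ℝ := {s : ℝ | ∃ d : Fin N → ℝ, (Matrix.diagonal d).PosSemidef ∧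
        (Q - Matrix.diagonal d).PosSemidef ∧
        s = sumKSmallest (fun n => d n * c n ^ 2) K} with hbigset
  have hmem : sumKSmallest (fun n => d n * c n ^ 2) K ∈ bigset := ⟨d, hDpsd, hQDpsd, rfl⟩
  obtain ⟨T₀, _, hT₀⟩ := Finset.exists_subset_card_eq (s := (Finset.univ : Finset (Fin N)))
    (n := K) (by simpa using hK)
  have hbdd : BddAbove bigset := by
    refine ⟨∑ n, Q n n * c n ^ 2, ?_⟩
    rintro s ⟨d', hd'psd, hsub, rfl⟩
    have hd'le : ∀ n, d' n ≤ Q n n := by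
      intro n
      have := psd_diag_entry_nonneg hsub n
      simp only [Matrix.sub_apply, Matrix.diagonal_apply_eq] at this
      linarith
    have hd'0 : ∀ n, 0 ≤ d' n := Matrix.posSemidef_diagonal_iff.mp hd'psd
    calc sumKSmallest (fun n => d' n * c n ^ 2) K ≤ ∑ n ∈ T₀, d' n * c n ^ 2 :=
          sumKSmallest_le _ hT₀
      _ ≤ ∑ n ∈ T₀, Q n n * c n ^ 2 :=
          Finset.sum_le_sum fun n _ => mul_le_mul_of_nonneg_right (hd'le n) (sq_nonneg _)
      _ ≤ ∑ n, Q n n * c n ^ 2 :=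
          Finset.sum_le_sum_of_subset_of_nonneg (Finset.subset_univ T₀)
            (fun n _ _ => mul_nonneg (hdiag n).le (sq_nonneg _))
  have h1 : (1 - δ) * sumKSmallest (fun n => Q n n * c n ^ 2) K ≤
      sumKSmallest (fun n => d n * c n ^ 2) K := by
    refine le_sumKSmallest _ hK fun T hT => ?_
    have : ∑ n ∈ T, d n * c n ^ 2 = (1 - δ) * ∑ n ∈ T, Q n n * c n ^ 2 := by
      rw [Finset.mul_sum]
      exact Finset.sum_congr rfl fun n _ => by rw [hd]; ring
    rw [this]
    exact mul_le_mul_of_nonneg_left (sumKSmallest_le _ hT) hδ0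
  exact h1.trans (le_csSup hbdd hmem)
end

section
/- Let Q = (I+Δ)Λ(I+Δ)ᵀ where I+Δ is orthogonal and Λ is positive definite diagonal, and suppose κ(Q)·ρ(Δ) < 1 where κ(Q) is the condition number of Q and ρ(Δ) the spectral radius of Δ. Then λ_min(Λ^{-1/2} Q Λ^{-1/2}) ≥ 1 − κ(Q)ρ(Δ) and λ_max(Λ^{-1/2} Q Λ^{-1/2}) ≤ 1 + κ(Q)(ρ(Δ) + ρ(Δ)²). -/
/-!
Write `s = Λ^{-1/2} y` and `u = (I + Δ)ᵀ s`, so that `yᵀ Λ^{-1/2} Q Λ^{-1/2} y = uᵀ Λ u` while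
`yᵀ y = sᵀ Λ s`. Orthogonality of `I + Δ` gives `‖u‖ = ‖s‖`, hence `‖u + s‖ ≤ 2‖s‖` by the
parallelogram law; it also makes `Δ` normal, so `‖u - s‖ = ‖Δᵀ s‖ ≤ ρ(Δ) ‖s‖`, because the operator
norm of a normal matrix is its spectral radius. The mean weight `c = (λ_min + λ_max) / 2` does not
distinguish two vectors of equal length, so `uᵀ Λ u - sᵀ Λ s = (u + s)ᵀ (Λ - c) (u - s)`, which is
at most `(λ_max - λ_min) ρ(Δ) ‖s‖² ≤ (κ - 1) ρ(Δ) yᵀ y` in absolute value.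
-/

open Matrix

open scoped Matrix.Norms.L2Operator in
theorem Matrix.l2_opNorm_le_of_eigenvalues_norm_le {n : Type*} [Fintype n] [DecidableEq n]
    (A : Matrix n n ℂ) [IsStarNormal A] {r : ℝ} (hr : 0 ≤ r)
    (hA : ∀ (ψ : ℂ) (v : n → ℂ), v ≠ 0 → A *ᵥ v = ψ • v → ‖ψ‖ ≤ r) : ‖A‖ ≤ r := by
  rw [← ENNReal.ofReal_le_ofReal_iff hr, ofReal_norm, enorm_eq_nnnorm,
    ← IsStarNormal.spectralRadius_eq_nnnorm]
  refine iSup₂_le fun ψ hψ => ?_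
  rw [← Matrix.spectrum_toLin', ← Module.End.hasEigenvalue_iff_mem_spectrum] at hψ
  obtain ⟨v, hv⟩ := hψ.exists_hasEigenvector
  rw [← enorm_eq_nnnorm, ← ofReal_norm]
  exact ENNReal.ofReal_le_ofReal (hA ψ v hv.2 hv.apply_eq_smul)

theorem EuclideanSpace.norm_sq_toLp_ofReal {n : Type*} [Fintype n] (v : n → ℝ) :
    ‖WithLp.toLp 2 (fun i => (v i : ℂ))‖ ^ 2 = v ⬝ᵥ v := by
  rw [EuclideanSpace.norm_sq_eq]
  simp [dotProduct, sq]

open scoped Matrix.Norms.L2Operator in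
theorem Matrix.dotProduct_mulVec_self_le_of_l2_opNorm_le {m n : Type*} [Fintype m] [Fintype n]
    [DecidableEq n] (B : Matrix m n ℝ) {r : ℝ} (hB : ‖B.map ((↑) : ℝ → ℂ)‖ ≤ r) (x : n → ℝ) :
    (B *ᵥ x) ⬝ᵥ (B *ᵥ x) ≤ r ^ 2 * (x ⬝ᵥ x) := by
  have hmap : B.map ((↑) : ℝ → ℂ) *ᵥ (fun i => (x i : ℂ)) = fun i => ((B *ᵥ x) i : ℂ) :=
    funext fun i => (Complex.ofRealHom.map_mulVec B x i).symm
  have h := (B.map ((↑) : ℝ → ℂ)).l2_opNorm_mulVec (WithLp.toLp 2 (fun i => (x i : ℂ)))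
  have h' := h.trans (mul_le_mul_of_nonneg_right hB (norm_nonneg _))
  rw [← EuclideanSpace.norm_sq_toLp_ofReal, ← EuclideanSpace.norm_sq_toLp_ofReal, ← mul_pow]
  refine pow_le_pow_left₀ (norm_nonneg _) ?_ 2
  simpa [hmap] using h'

theorem Matrix.isStarNormal_map_ofReal {n : Type*} [Fintype n] [DecidableEq n] {Δ : Matrix n n ℝ}
    (h : Commute Δᵀ Δ) : IsStarNormal (Δ.map ((↑) : ℝ → ℂ)) := by
  refine ⟨?_⟩
  have hstar : star (Δ.map ((↑) : ℝ → ℂ)) = Δᵀ.map ((↑) : ℝ → ℂ) := by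
    ext i j
    simp
  rw [hstar]
  exact h.map Complex.ofRealHom.mapMatrix

open scoped Matrix.Norms.L2Operator in
theorem Matrix.dotProduct_transpose_mulVec_self_le_of_eigenvalues_norm_le {n : Type*} [Fintype n]
    [DecidableEq n] {Δ : Matrix n n ℝ} (hΔ : Commute Δᵀ Δ) {r : ℝ} (hr : 0 ≤ r)
    (hψ : ∀ (ψ : ℂ) (v : n → ℂ), v ≠ 0 → Δ.map ((↑) : ℝ → ℂ) *ᵥ v = ψ • v → ‖ψ‖ ≤ r)
    (x : n → ℝ) : (Δᵀ *ᵥ x) ⬝ᵥ (Δᵀ *ᵥ x) ≤ r ^ 2 * (x ⬝ᵥ x) := by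
  have := isStarNormal_map_ofReal hΔ
  refine dotProduct_mulVec_self_le_of_l2_opNorm_le _ ?_ x
  rw [← conjTranspose_eq_transpose_of_trivial, conjTranspose_map _ fun x => by simp,
    l2_opNorm_conjTranspose]
  exact l2_opNorm_le_of_eigenvalues_norm_le _ hr hψ

theorem Matrix.commute_transpose_self_of_orthogonal_one_add {n : Type*} [Fintype n]
    [DecidableEq n] {Δ : Matrix n n ℝ} (h : (1 + Δ)ᵀ * (1 + Δ) = 1) : Commute Δᵀ Δ := by
  have hU : Commute (1 + Δ)ᵀ (1 + Δ) := h.trans (mul_eq_one_comm.mp h).symm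
  rw [transpose_add, transpose_one] at hU
  simpa using (hU.sub_left (Commute.one_left _)).sub_right (Commute.one_right _)

theorem Matrix.dotProduct_transpose_mulVec_self_eq {n : Type*} [Fintype n] [DecidableEq n]
    {U : Matrix n n ℝ} (hU : U * Uᵀ = 1) (s : n → ℝ) : (Uᵀ *ᵥ s) ⬝ᵥ (Uᵀ *ᵥ s) = s ⬝ᵥ s := by
  have h := dotProduct_mulVec s U (Uᵀ *ᵥ s)
  rwa [mulVec_mulVec, hU, one_mulVec, ← mulVec_transpose, eq_comm] at h

theorem Matrix.dotProduct_mulVec_transpose_mul_diagonal_mul {m n : Type*} [Fintype m] [Fintype n]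
    [DecidableEq m] (B : Matrix m n ℝ) (l : m → ℝ) (y : n → ℝ) :
    y ⬝ᵥ (Bᵀ * diagonal l * B) *ᵥ y = ∑ i, l i * (B *ᵥ y) i ^ 2 := by
  rw [← mulVec_mulVec, ← mulVec_mulVec, dotProduct_mulVec, vecMul_transpose]
  simp only [dotProduct, mulVec_diagonal]
  exact Finset.sum_congr rfl fun i _ => by ring

theorem Matrix.sum_mul_sq_diagonal_inv_sqrt_mulVec {n : Type*} [Fintype n] [DecidableEq n]
    {l : n → ℝ} (hl : ∀ i, 0 < l i) (y : n → ℝ) :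
    ∑ i, l i * (diagonal (fun i => 1 / Real.sqrt (l i)) *ᵥ y) i ^ 2 = y ⬝ᵥ y := by
  refine Finset.sum_congr rfl fun i _ => ?_
  rw [mulVec_diagonal, mul_pow, div_pow, one_pow, Real.sq_sqrt (hl i).le, ← mul_assoc,
    mul_one_div_cancel (hl i).ne', one_mul, sq]

theorem mul_dotProduct_self_le_sum_mul_sq {n : Type*} [Fintype n] {l : n → ℝ} {a : ℝ}
    (hl : ∀ i, a ≤ l i) (s : n → ℝ) : a * (s ⬝ᵥ s) ≤ ∑ i, l i * s i ^ 2 := by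
  rw [dotProduct, Finset.mul_sum]
  refine Finset.sum_le_sum fun i _ => ?_
  rw [← sq]
  exact mul_le_mul_of_nonneg_right (hl i) (sq_nonneg _)

theorem dotProduct_add_self_le_of_dotProduct_self_eq {n : Type*} [Fintype n] {u s : n → ℝ}
    (h : u ⬝ᵥ u = s ⬝ᵥ s) : (u + s) ⬝ᵥ (u + s) ≤ 4 * (s ⬝ᵥ s) := by
  have hpar : (u + s) ⬝ᵥ (u + s) + (u - s) ⬝ᵥ (u - s) = 2 * (u ⬝ᵥ u) + 2 * (s ⬝ᵥ s) := by
    simp only [add_dotProduct, dotProduct_add, sub_dotProduct, dotProduct_sub, dotProduct_comm u s]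
    ring
  have : 0 ≤ (u - s) ⬝ᵥ (u - s) := Finset.sum_nonneg fun i _ => mul_self_nonneg _
  linarith

theorem sq_sum_mul_sq_sub_sum_mul_sq_le {n : Type*} [Fintype n] {l : n → ℝ} {a b : ℝ}
    (hl : ∀ i, l i ∈ Set.Icc a b) {u s : n → ℝ} (h : u ⬝ᵥ u = s ⬝ᵥ s) :
    (∑ i, l i * u i ^ 2 - ∑ i, l i * s i ^ 2) ^ 2 ≤
      ((b - a) / 2) ^ 2 * ((u + s) ⬝ᵥ (u + s)) * ((u - s) ⬝ᵥ (u - s)) := by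
  set c := (a + b) / 2 with hc_def
  have hcentre : ∑ i, l i * u i ^ 2 - ∑ i, l i * s i ^ 2 =
      ∑ i, ((l i - c) * (u + s) i) * (u - s) i := by
    have hc : ∑ i, c * (u i ^ 2 - s i ^ 2) = 0 := by
      simp only [dotProduct, ← sq] at h
      rw [← Finset.mul_sum, Finset.sum_sub_distrib, h, sub_self, mul_zero]
    rw [← sub_zero (∑ i, _ - _), ← hc, ← Finset.sum_sub_distrib, ← Finset.sum_sub_distrib]
    exact Finset.sum_congr rfl fun i _ => by simp only [Pi.add_apply, Pi.sub_apply]; ring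
  have hweight : ∑ i, ((l i - c) * (u + s) i) ^ 2 ≤ ((b - a) / 2) ^ 2 * ((u + s) ⬝ᵥ (u + s)) := by
    rw [dotProduct, Finset.mul_sum]
    refine Finset.sum_le_sum fun i _ => ?_
    have hli : (l i - c) ^ 2 ≤ ((b - a) / 2) ^ 2 := by
      obtain ⟨hai, hib⟩ := hl i
      exact sq_le_sq' (by rw [hc_def]; linarith) (by rw [hc_def]; linarith)
    rw [mul_pow, ← sq]
    exact mul_le_mul_of_nonneg_right hli (sq_nonneg _)
  calc _ = (∑ i, ((l i - c) * (u + s) i) * (u - s) i) ^ 2 := by rw [hcentre]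
    _ ≤ (∑ i, ((l i - c) * (u + s) i) ^ 2) * ∑ i, (u - s) i ^ 2 :=
      Finset.sum_mul_sq_le_sq_mul_sq _ _ _
    _ ≤ _ := by
      rw [show ∑ i, (u - s) i ^ 2 = (u - s) ⬝ᵥ (u - s) by simp only [dotProduct, sq]]
      exact mul_le_mul_of_nonneg_right hweight (Finset.sum_nonneg fun i _ => mul_self_nonneg _)

theorem abs_sum_mul_sq_sub_sum_mul_sq_le {n : Type*} [Fintype n] {l : n → ℝ} {a b : ℝ}
    (hab : a ≤ b) (hl : ∀ i, l i ∈ Set.Icc a b) {u s : n → ℝ} (h : u ⬝ᵥ u = s ⬝ᵥ s) {r : ℝ}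
    (hr : 0 ≤ r) (hus : (u - s) ⬝ᵥ (u - s) ≤ r ^ 2 * (s ⬝ᵥ s)) :
    |∑ i, l i * u i ^ 2 - ∑ i, l i * s i ^ 2| ≤ (b - a) * r * (s ⬝ᵥ s) := by
  have hs : 0 ≤ s ⬝ᵥ s := Finset.sum_nonneg fun i _ => mul_self_nonneg _
  refine abs_le_of_sq_le_sq ?_ (by positivity)
  calc _ ≤ ((b - a) / 2) ^ 2 * ((u + s) ⬝ᵥ (u + s)) * ((u - s) ⬝ᵥ (u - s)) :=
        sq_sum_mul_sq_sub_sum_mul_sq_le hl h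
    _ ≤ ((b - a) / 2) ^ 2 * (4 * (s ⬝ᵥ s)) * (r ^ 2 * (s ⬝ᵥ s)) := by
        gcongr
        · exact Finset.sum_nonneg fun i _ => mul_self_nonneg _
        · exact dotProduct_add_self_le_of_dotProduct_self_eq h
    _ = ((b - a) * r * (s ⬝ᵥ s)) ^ 2 := by ring

theorem abs_sum_mul_sq_sub_sum_mul_sq_le_mul_sum {n : Type*} [Fintype n] {l : n → ℝ} {a b : ℝ}
    (ha : 0 < a) (hab : a ≤ b) (hl : ∀ i, l i ∈ Set.Icc a b) {u s : n → ℝ}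
    (h : u ⬝ᵥ u = s ⬝ᵥ s) {r : ℝ} (hr : 0 ≤ r) (hus : (u - s) ⬝ᵥ (u - s) ≤ r ^ 2 * (s ⬝ᵥ s)) :
    |∑ i, l i * u i ^ 2 - ∑ i, l i * s i ^ 2| ≤ (b / a - 1) * r * ∑ i, l i * s i ^ 2 := by
  have hκ : 0 ≤ b / a - 1 := by rw [sub_nonneg, one_le_div ha]; exact hab
  calc _ ≤ (b - a) * r * (s ⬝ᵥ s) := abs_sum_mul_sq_sub_sum_mul_sq_le hab hl h hr hus
    _ = (b / a - 1) * r * (a * (s ⬝ᵥ s)) := by field_simp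
    _ ≤ _ := by
      gcongr
      exact mul_dotProduct_self_le_sum_mul_sq (fun i => (hl i).1) s

theorem nearly_aligned_eigenvalue_bounds_general {N : ℕ}
    (Δ : Matrix (Fin N) (Fin N) ℝ)
    (horth : (1 + Δ)ᵀ * (1 + Δ) = 1)
    (l : Fin N → ℝ) (hl : ∀ n, 0 < l n)
    (lmin lmax : ℝ)
    (hlmin : IsLeast (Set.range l) lmin)
    (hlmax : IsGreatest (Set.range l) lmax)
    (r : ℝ)
    (hr : IsGreatest {t : ℝ | ∃ (ψ : ℂ) (v : Fin N → ℂ), v ≠ 0 ∧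
        (Δ.map (fun x : ℝ => (x : ℂ))) *ᵥ v = ψ • v ∧ t = ‖ψ‖} r) :
    ∀ y : Fin N → ℝ,
      (1 - (lmax / lmin) * r) * (y ⬝ᵥ y) ≤
          y ⬝ᵥ (Matrix.diagonal (fun n => 1 / Real.sqrt (l n)) *
            ((1 + Δ) * Matrix.diagonal l * (1 + Δ)ᵀ) *
            Matrix.diagonal (fun n => 1 / Real.sqrt (l n))) *ᵥ y ∧
        y ⬝ᵥ (Matrix.diagonal (fun n => 1 / Real.sqrt (l n)) *
            ((1 + Δ) * Matrix.diagonal l * (1 + Δ)ᵀ) *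
            Matrix.diagonal (fun n => 1 / Real.sqrt (l n))) *ᵥ y ≤
          (1 + (lmax / lmin) * (r + r ^ 2)) * (y ⬝ᵥ y) := by
  intro y
  obtain ⟨n₀, rfl⟩ := hlmin.1
  have hr0 : 0 ≤ r := by
    obtain ⟨ψ, -, -, -, rfl⟩ := hr.1
    exact norm_nonneg ψ
  set D := diagonal fun n => 1 / Real.sqrt (l n)
  set s := D *ᵥ y
  set u := (1 + Δ)ᵀ *ᵥ s
  have hform : D * ((1 + Δ) * diagonal l * (1 + Δ)ᵀ) * D =
      ((1 + Δ)ᵀ * D)ᵀ * diagonal l * ((1 + Δ)ᵀ * D) := by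
    simp only [D, transpose_mul, diagonal_transpose, transpose_transpose, Matrix.mul_assoc]
  have hus : u ⬝ᵥ u = s ⬝ᵥ s :=
    dotProduct_transpose_mulVec_self_eq (mul_eq_one_comm.mp horth) s
  have hdist : (u - s) ⬝ᵥ (u - s) ≤ r ^ 2 * (s ⬝ᵥ s) := by
    rw [show u - s = Δᵀ *ᵥ s by simp [u, add_mulVec]]
    exact dotProduct_transpose_mulVec_self_le_of_eigenvalues_norm_le
      (commute_transpose_self_of_orthogonal_one_add horth) hr0
      (fun ψ v hv hψ => hr.2 ⟨ψ, v, hv, hψ, rfl⟩) s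
  have hclose := abs_sum_mul_sq_sub_sum_mul_sq_le_mul_sum (hl n₀) (hlmin.2 hlmax.1)
    (fun n => ⟨hlmin.2 ⟨n, rfl⟩, hlmax.2 ⟨n, rfl⟩⟩) hus hr0 hdist
  rw [sum_mul_sq_diagonal_inv_sqrt_mulVec hl] at hclose
  rw [hform, dotProduct_mulVec_transpose_mul_diagonal_mul, ← mulVec_mulVec]
  obtain ⟨hlower, hupper⟩ := abs_le.mp hclose
  have hry : 0 ≤ r * (y ⬝ᵥ y) := mul_nonneg hr0 (Finset.sum_nonneg fun i _ => mul_self_nonneg _)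
  have hκ : 0 ≤ lmax / l n₀ := div_nonneg ((hl n₀).le.trans (hlmin.2 hlmax.1)) (hl n₀).le
  constructor
  · linarith
  · linarith [mul_nonneg hκ (mul_nonneg hr0 hry)]

/-- Lemma 4: For `Q = (I+Δ)Λ(I+Δ)ᵀ` with `I+Δ` orthogonal, `Λ` positive
definite diagonal, condition number `κ = lmax/lmin`, and spectral radius `ρ(Δ) = r` with
`κr < 1`, the eigenvalues of `Λ^{-1/2}QΛ^{-1/2}` lie in `[1 − κr, 1 + κ(r + r²)]`
(stated via quadratic forms). -/
theorem nearly_aligned_eigenvalue_bounds {N : ℕ}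
    (Δ : Matrix (Fin N) (Fin N) ℝ)
    (horth : (1 + Δ)ᵀ * (1 + Δ) = 1)
    (l : Fin N → ℝ) (hl : ∀ n, 0 < l n)
    (lmin lmax : ℝ)
    (hlmin : IsLeast (Set.range l) lmin)
    (hlmax : IsGreatest (Set.range l) lmax)
    (r : ℝ)
    (hr : IsGreatest {t : ℝ | ∃ (ψ : ℂ) (v : Fin N → ℂ), v ≠ 0 ∧
        (Δ.map (fun x : ℝ => (x : ℂ))) *ᵥ v = ψ • v ∧ t = ‖ψ‖} r)
    (hκr : (lmax / lmin) * r < 1) :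
    ∀ y : Fin N → ℝ,
      (1 - (lmax / lmin) * r) * (y ⬝ᵥ y) ≤
          y ⬝ᵥ (Matrix.diagonal (fun n => 1 / Real.sqrt (l n)) *
            ((1 + Δ) * Matrix.diagonal l * (1 + Δ)ᵀ) *
            Matrix.diagonal (fun n => 1 / Real.sqrt (l n))) *ᵥ y ∧
        y ⬝ᵥ (Matrix.diagonal (fun n => 1 / Real.sqrt (l n)) *
            ((1 + Δ) * Matrix.diagonal l * (1 + Δ)ᵀ) *
            Matrix.diagonal (fun n => 1 / Real.sqrt (l n))) *ᵥ y ≤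
          (1 + (lmax / lmin) * (r + r ^ 2)) * (y ⬝ᵥ y) :=
  nearly_aligned_eigenvalue_bounds_general Δ horth l hl lmin lmax hlmin hlmax r hr
end
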